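/- For every h ∈ SL₂(ℝ), the matrix ι(h) preserves the quadratic form Q₀(x,y,z) = x² + y² − z², i.e., Q₀(v·ι(h)) = Q₀(v) for all v ∈ ℝ³. -/

import Mathlib

open Matrix MeasureTheory Set Pointwise
open scoped ENNReal

noncomputable def iota (h : Matrix (Fin 2) (Fin 2) ℝ) : Matrix (Fin 3) (Fin 3) ℝ :=
  let a := h 0 0; let b := h 0 1; let c := h 1 0; let d := h 1 1
  !![(a^2-b^2-c^2+d^2)/2, a*c-b*d, (a^2-b^2+c^2-d^2)/2;
     a*b-c*d, b*c+a*d, a*b+c*d;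
     (a^2+b^2-c^2-d^2)/2, a*c+b*d, (a^2+b^2+c^2+d^2)/2]

noncomputable def Q0 (v : Fin 3 → ℝ) : ℝ := v 0 ^ 2 + v 1 ^ 2 - v 2 ^ 2

/-!
Identify v = (x, y, z) with the binary quadratic form (z + x) s² + 2y st + (z − x) t², whose
discriminant is 4 Q₀(v). For h = (a b; c d), v·ι(h) is that form composed with the
substitution (s, t) ↦ (as + bt, cs + dt), and a substitution multiplies the discriminant by
det(h)². In matrix terms, with J = diag(1, 1, −1) the Gram matrix of Q₀, this is the polynomial
identity ι(h) J ι(h)ᵀ = det(h)² J.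
-/

theorem Matrix.vecMul_dotProduct_mulVec_vecMul {n R : Type*} [Fintype n] [CommSemiring R]
    (J M : Matrix n n R) (v : n → R) :
    (v ᵥ* M) ⬝ᵥ (J *ᵥ (v ᵥ* M)) = v ⬝ᵥ ((M * J * Mᵀ) *ᵥ v) := by
  rw [← mulVec_mulVec, ← mulVec_mulVec, mulVec_transpose, dotProduct_mulVec v M]

def Q0Matrix : Matrix (Fin 3) (Fin 3) ℝ := diagonal ![1, 1, -1]

theorem Q0_eq_dotProduct_Q0Matrix_mulVec (v : Fin 3 → ℝ) :
    Q0 v = v ⬝ᵥ (Q0Matrix *ᵥ v) := by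
  simp only [Q0, Q0Matrix, mulVec_diagonal, dotProduct, Fin.sum_univ_three, cons_val_zero,
    cons_val_one, cons_val, one_mul, neg_mul, mul_neg]
  ring

theorem iota_mul_Q0Matrix_mul_transpose (h : Matrix (Fin 2) (Fin 2) ℝ) :
    iota h * Q0Matrix * (iota h)ᵀ = h.det ^ 2 • Q0Matrix := by
  rw [Q0Matrix]
  ext i j
  fin_cases i <;> fin_cases j <;>
    simp [iota, det_fin_two, mul_apply, Fin.sum_univ_three, vecMul_diagonal] <;> ring

theorem Q0_vecMul_iota (h : Matrix (Fin 2) (Fin 2) ℝ) (v : Fin 3 → ℝ) :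
    Q0 (v ᵥ* iota h) = h.det ^ 2 * Q0 v := by
  rw [Q0_eq_dotProduct_Q0Matrix_mulVec, vecMul_dotProduct_mulVec_vecMul,
    iota_mul_Q0Matrix_mul_transpose, smul_mulVec, dotProduct_smul, smul_eq_mul,
    ← Q0_eq_dotProduct_Q0Matrix_mulVec]

/-- ι(h) preserves the quadratic form Q₀(x,y,z) = x² + y² − z². -/
theorem iota_preserves_Q0 (h : Matrix (Fin 2) (Fin 2) ℝ) (hh : h.det = 1)
    (v : Fin 3 → ℝ) : Q0 (v ᵥ* iota h) = Q0 v := by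
  rw [Q0_vecMul_iota, hh, one_pow, one_mul]
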